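/- Let f̃ : Ã ⟶ B̃ be a morphism of C, with Gysin morphism f! : B ⟶ A in C (computed from coevΔA and evΔB) and Gysin morphism f^{HL}! : F B ⟶ F A in D of ch(f̃) (computed from coevΞA and evΞB). For every morphism ξ : 𝟙 ⟶ B of C (a K-theory class of B), write ch(ξ) : 𝟙 ⟶ F B for the composite of the unit isomorphism 𝟙 ≅ F 𝟙 with F.map ξ. Then ch(ξ ≫ f!) ≫ Todd(A) = ch(ξ) ≫ Todd(B) ≫ f^{HL}!. -/
import Mathlib


open CategoryTheory MonoidalCategory Functor.LaxMonoidal Functor.OplaxMonoidal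

/-- An *exact pairing* for a pair of objects `(A, B)` in a monoidal category:
morphisms `coev : 𝟙 ⟶ A ⊗ B` and `ev : B ⊗ A ⟶ 𝟙` satisfying the two zigzag
identities (as in Mathlib's `CategoryTheory.ExactPairing`). -/
def IsExactPairing {C : Type*} [Category C] [MonoidalCategory C]
    (A B : C) (coev : 𝟙_ C ⟶ A ⊗ B) (ev : B ⊗ A ⟶ 𝟙_ C) : Prop :=
  (λ_ A).inv ≫ (coev ▷ A) ≫ (α_ A B A).hom ≫ (A ◁ ev) ≫ (ρ_ A).hom = 𝟙 A ∧
  (ρ_ B).inv ≫ (B ◁ coev) ≫ (α_ B A B).inv ≫ (ev ▷ B) ≫ (λ_ B).hom = 𝟙 B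

/-- The structure-corrected image `ch(ev) : F B ⊗ F A ⟶ 𝟙` under a strong
monoidal functor `F` of an evaluation-type morphism `ev : B ⊗ A ⟶ 𝟙`. -/
def chEv {C : Type*} [Category C] [MonoidalCategory C]
    {D : Type*} [Category D] [MonoidalCategory D]
    (F : C ⥤ D) [F.Monoidal] {A B : C} (ev : B ⊗ A ⟶ 𝟙_ C) :
    F.obj B ⊗ F.obj A ⟶ 𝟙_ D :=
  μ F B A ≫ F.map ev ≫ η F

/-- The structure-corrected image `ch(coev) : 𝟙 ⟶ F A ⊗ F B` under a strong
monoidal functor `F` of a coevaluation-type morphism `coev : 𝟙 ⟶ A ⊗ B`. -/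
def chCoev {C : Type*} [Category C] [MonoidalCategory C]
    {D : Type*} [Category D] [MonoidalCategory D]
    (F : C ⥤ D) [F.Monoidal] {A B : C} (coev : 𝟙_ C ⟶ A ⊗ B) :
    𝟙_ D ⟶ F.obj A ⊗ F.obj B :=
  ε F ≫ F.map coev ≫ δ F A B

/-- The Todd class `Todd(A) : F A ⟶ F A`, computed from the cyclic coevaluation
`coevΞ : 𝟙 ⟶ F A ⊗ F A'` and the Chern character image `ch(evΔ)` of the
K-homology evaluation `evΔ : A' ⊗ A ⟶ 𝟙`:
`Todd(A) = (λ_{F A}).inv ≫ (coevΞ ▷ F A) ≫ associator ≫ (F A ◁ ch(evΔ)) ≫ (ρ_{F A}).hom`. -/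
def toddClass {C : Type*} [Category C] [MonoidalCategory C]
    {D : Type*} [Category D] [MonoidalCategory D]
    (F : C ⥤ D) [F.Monoidal] {A A' : C}
    (evΔ : A' ⊗ A ⟶ 𝟙_ C) (coevΞ : 𝟙_ D ⟶ F.obj A ⊗ F.obj A') :
    F.obj A ⟶ F.obj A :=
  (λ_ (F.obj A)).inv ≫ (coevΞ ▷ F.obj A) ≫
    (α_ (F.obj A) (F.obj A') (F.obj A)).hom ≫ (F.obj A ◁ chEv F evΔ) ≫
      (ρ_ (F.obj A)).hom

/-- The inverse Todd class `ToddInv(A) : F A ⟶ F A`, defined by the same formula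
as the Todd class, with `coevΞ` replaced by `ch(coevΔ)` and `ch(evΔ)` replaced
by the cyclic evaluation `evΞ`. -/
def toddInv {C : Type*} [Category C] [MonoidalCategory C]
    {D : Type*} [Category D] [MonoidalCategory D]
    (F : C ⥤ D) [F.Monoidal] {A A' : C}
    (coevΔ : 𝟙_ C ⟶ A ⊗ A') (evΞ : F.obj A' ⊗ F.obj A ⟶ 𝟙_ D) :
    F.obj A ⟶ F.obj A :=
  (λ_ (F.obj A)).inv ≫ (chCoev F coevΔ ▷ F.obj A) ≫
    (α_ (F.obj A) (F.obj A') (F.obj A)).hom ≫ (F.obj A ◁ evΞ) ≫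
      (ρ_ (F.obj A)).hom

/-- The Gysin morphism (mate) `u! : B ⟶ A` of a morphism `u : A' ⟶ B'` (where
`A'`, `B'` are the duals of `A`, `B`), computed from a coevaluation
`coevA : 𝟙 ⟶ A ⊗ A'` and an evaluation `evB : B' ⊗ B ⟶ 𝟙`:
`u! = (λ_B).inv ≫ (coevA ▷ B) ≫ (α_{A,A',B}).hom ≫ (A ◁ (u ▷ B)) ≫ (A ◁ evB) ≫ (ρ_A).hom`. -/
def gysin {C : Type*} [Category C] [MonoidalCategory C]
    {A A' B B' : C} (coevA : 𝟙_ C ⟶ A ⊗ A') (evB : B' ⊗ B ⟶ 𝟙_ C)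
    (u : A' ⟶ B') : B ⟶ A :=
  (λ_ B).inv ≫ (coevA ▷ B) ≫ (α_ A A' B).hom ≫ (A ◁ (u ▷ B)) ≫ (A ◁ evB) ≫ (ρ_ A).hom

section Aux

variable {C : Type*} [Category C] [MonoidalCategory C]
    {D : Type*} [Category D] [MonoidalCategory D]

lemma map_gysin (F : C ⥤ D) [F.Monoidal] {A A' B B' : C}
    (c : 𝟙_ C ⟶ A ⊗ A') (e : B' ⊗ B ⟶ 𝟙_ C) (u : A' ⟶ B') :
    F.map (gysin c e u) = gysin (chCoev F c) (chEv F e) (F.map u) := by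
  simp only [gysin, chCoev, chEv, Functor.map_comp,
    Functor.Monoidal.map_leftUnitor_inv, Functor.Monoidal.map_whiskerRight,
    Functor.Monoidal.map_whiskerLeft, Functor.Monoidal.map_associator,
    Functor.Monoidal.map_rightUnitor, Category.assoc,
    Functor.Monoidal.μ_δ_assoc, Functor.Monoidal.δ_μ_assoc,
    Functor.Monoidal.whiskerLeft_μ_δ_assoc, Functor.Monoidal.whiskerLeft_δ_μ_assoc,
    MonoidalCategory.whiskerLeft_comp, comp_whiskerRight, Category.id_comp, Category.comp_id]

lemma chZig2 (F : C ⥤ D) [F.Monoidal] {A A' : C}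
    (c : 𝟙_ C ⟶ A ⊗ A') (e : A' ⊗ A ⟶ 𝟙_ C)
    (h : (ρ_ A').inv ≫ (A' ◁ c) ≫ (α_ A' A A').inv ≫ (e ▷ A') ≫ (λ_ A').hom = 𝟙 A') :
    (ρ_ (F.obj A')).inv ≫ (F.obj A' ◁ chCoev F c) ≫
      (α_ (F.obj A') (F.obj A) (F.obj A')).inv ≫ (chEv F e ▷ F.obj A') ≫
      (λ_ (F.obj A')).hom = 𝟙 (F.obj A') := by
  have h' := congrArg F.map h
  simp only [Functor.map_comp, Functor.map_id,
    Functor.Monoidal.map_rightUnitor_inv, Functor.Monoidal.map_whiskerLeft,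
    Functor.Monoidal.map_associator_inv, Functor.Monoidal.map_whiskerRight,
    Functor.Monoidal.map_leftUnitor, Category.assoc,
    Functor.Monoidal.μ_δ_assoc, Functor.Monoidal.δ_μ_assoc,
    Functor.Monoidal.whiskerLeft_μ_δ_assoc, Functor.Monoidal.whiskerLeft_δ_μ_assoc,
    MonoidalCategory.whiskerLeft_comp, comp_whiskerRight, Category.id_comp,
    Category.comp_id] at h'
  simp only [chCoev, chEv, MonoidalCategory.whiskerLeft_comp, comp_whiskerRight,
    Category.assoc]
  rw [F.map_id] at h'
  exact h'


lemma zig'' {X X' : D} (c1 : 𝟙_ D ⟶ X ⊗ X') (eX : X' ⊗ X ⟶ 𝟙_ D)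
    (zig : (ρ_ X').inv ≫ (X' ◁ c1) ≫ (α_ X' X X').inv ≫ (eX ▷ X') ≫ (λ_ X').hom = 𝟙 X') :
    X' ◁ c1 ⊗≫ eX ▷ X' = ⊗𝟙.hom := by
  have : X' ◁ c1 ≫ (α_ X' X X').inv ≫ eX ▷ X' = (ρ_ X').hom ≫ (λ_ X').inv := by
    rw [← cancel_epi (ρ_ X').inv, ← cancel_mono (λ_ X').hom]
    simpa using zig
  convert this <;> simp [monoidalComp]

lemma gysin_gysin {X X' Y Y' Z Z' : D}
    (c1 : 𝟙_ D ⟶ X ⊗ X') (eY : Y' ⊗ Y ⟶ 𝟙_ D)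
    (c2 : 𝟙_ D ⟶ Z ⊗ Z') (eX : X' ⊗ X ⟶ 𝟙_ D) (u : X' ⟶ Y') (v : Z' ⟶ X')
    (zig : (ρ_ X').inv ≫ (X' ◁ c1) ≫ (α_ X' X X').inv ≫ (eX ▷ X') ≫ (λ_ X').hom = 𝟙 X') :
    gysin c1 eY u ≫ gysin c2 eX v = gysin c2 eY (v ≫ u) := by
  calc gysin c1 eY u ≫ gysin c2 eX v
      = 𝟙 _ ⊗≫ c1 ▷ Y ⊗≫ X ◁ (u ▷ Y) ⊗≫
          ((𝟙_ D) ◁ (X ◁ eY) ≫ c2 ▷ (X ⊗ 𝟙_ D)) ⊗≫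
          Z ◁ (v ▷ X) ⊗≫ Z ◁ eX ⊗≫ 𝟙 _ := by
        dsimp only [gysin]; monoidal
    _ = 𝟙 _ ⊗≫ c1 ▷ Y ⊗≫
          ((𝟙_ D) ◁ (X ◁ (u ▷ Y)) ≫ c2 ▷ (X ⊗ (Y' ⊗ Y))) ⊗≫
          (Z ⊗ Z') ◁ (X ◁ eY) ⊗≫ Z ◁ (v ▷ X) ⊗≫ Z ◁ eX ⊗≫ 𝟙 _ := by
        rw [whisker_exchange]; monoidal
    _ = 𝟙 _ ⊗≫ ((𝟙_ D) ◁ (c1 ▷ Y) ≫ c2 ▷ ((X ⊗ X') ⊗ Y)) ⊗≫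
          (Z ⊗ Z') ◁ (X ◁ (u ▷ Y)) ⊗≫
          (Z ⊗ Z') ◁ (X ◁ eY) ⊗≫ Z ◁ (v ▷ X) ⊗≫ Z ◁ eX ⊗≫ 𝟙 _ := by
        rw [whisker_exchange]; monoidal
    _ = 𝟙 _ ⊗≫ c2 ▷ (𝟙_ D ⊗ Y) ⊗≫ (Z ⊗ Z') ◁ (c1 ▷ Y) ⊗≫
          (Z ⊗ Z') ◁ (X ◁ (u ▷ Y)) ⊗≫
          ((Z ⊗ Z') ◁ (X ◁ eY) ≫ (Z ◁ v) ▷ (X ⊗ 𝟙_ D)) ⊗≫ Z ◁ eX ⊗≫ 𝟙 _ := by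
        rw [whisker_exchange]; monoidal
    _ = 𝟙 _ ⊗≫ c2 ▷ (𝟙_ D ⊗ Y) ⊗≫ (Z ⊗ Z') ◁ (c1 ▷ Y) ⊗≫
          ((Z ⊗ Z') ◁ (X ◁ (u ▷ Y)) ≫ (Z ◁ v) ▷ (X ⊗ (Y' ⊗ Y))) ⊗≫
          (Z ⊗ X') ◁ (X ◁ eY) ⊗≫ Z ◁ eX ⊗≫ 𝟙 _ := by
        rw [whisker_exchange]; monoidal
    _ = 𝟙 _ ⊗≫ c2 ▷ (𝟙_ D ⊗ Y) ⊗≫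
          ((Z ⊗ Z') ◁ (c1 ▷ Y) ≫ (Z ◁ v) ▷ ((X ⊗ X') ⊗ Y)) ⊗≫
          (Z ⊗ X') ◁ (X ◁ (u ▷ Y)) ⊗≫
          (Z ⊗ X') ◁ (X ◁ eY) ⊗≫ Z ◁ eX ⊗≫ 𝟙 _ := by
        rw [whisker_exchange]; monoidal
    _ = 𝟙 _ ⊗≫ c2 ▷ (𝟙_ D ⊗ Y) ⊗≫ (Z ◁ v) ▷ (𝟙_ D ⊗ Y) ⊗≫
          (Z ⊗ X') ◁ (c1 ▷ Y) ⊗≫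
          (Z ⊗ (X' ⊗ X)) ◁ (u ▷ Y) ⊗≫
          ((Z ⊗ (X' ⊗ X)) ◁ eY ≫ (Z ◁ eX) ▷ (𝟙_ D)) ⊗≫ 𝟙 _ := by
        rw [whisker_exchange]; monoidal
    _ = 𝟙 _ ⊗≫ c2 ▷ (𝟙_ D ⊗ Y) ⊗≫ (Z ◁ v) ▷ (𝟙_ D ⊗ Y) ⊗≫
          (Z ⊗ X') ◁ (c1 ▷ Y) ⊗≫
          ((Z ⊗ (X' ⊗ X)) ◁ (u ▷ Y) ≫ (Z ◁ eX) ▷ (Y' ⊗ Y)) ⊗≫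
          (Z ⊗ 𝟙_ D) ◁ eY ⊗≫ 𝟙 _ := by
        rw [whisker_exchange]; monoidal
    _ = 𝟙 _ ⊗≫ c2 ▷ (𝟙_ D ⊗ Y) ⊗≫ (Z ◁ v) ▷ (𝟙_ D ⊗ Y) ⊗≫
          Z ◁ ((X' ◁ c1 ⊗≫ eX ▷ X') ▷ Y) ⊗≫
          Z ◁ (u ▷ Y) ⊗≫ Z ◁ eY ⊗≫ 𝟙 _ := by
        rw [whisker_exchange]; monoidal
    _ = gysin c2 eY (v ≫ u) := by
        rw [zig'' c1 eX zig]
        dsimp only [gysin]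
        simp only [comp_whiskerRight, MonoidalCategory.whiskerLeft_comp]
        monoidal

end Aux

/-- The Grothendieck–Riemann–Roch theorem (weak case, even degree): in the
setting of exact pairings `(coevΔA, evΔA)`, `(coevΔB, evΔB)` in `C` and
`(coevΞA, evΞA)`, `(coevΞB, evΞB)` in `D`, a morphism `f' : A' ⟶ B'` with Gysin
morphisms `f! : B ⟶ A` in `C` and `f^{HL}! : F B ⟶ F A` in `D` of `F.map f'`,
and any K-theory class `ξ : 𝟙 ⟶ B`, writing `ch(ξ) = ε F ≫ F.map ξ`, one has
`ch(ξ ≫ f!) ≫ Todd(A) = ch(ξ) ≫ Todd(B) ≫ f^{HL}!`. -/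
theorem grothendieck_riemann_roch_weak
    {C : Type*} [Category C] [MonoidalCategory C]
    {D : Type*} [Category D] [MonoidalCategory D]
    (F : C ⥤ D) [F.Monoidal] {A A' B B' : C}
    (coevΔA : 𝟙_ C ⟶ A ⊗ A') (evΔA : A' ⊗ A ⟶ 𝟙_ C)
    (coevΔB : 𝟙_ C ⟶ B ⊗ B') (evΔB : B' ⊗ B ⟶ 𝟙_ C)
    (coevΞA : 𝟙_ D ⟶ F.obj A ⊗ F.obj A') (evΞA : F.obj A' ⊗ F.obj A ⟶ 𝟙_ D)
    (coevΞB : 𝟙_ D ⟶ F.obj B ⊗ F.obj B') (evΞB : F.obj B' ⊗ F.obj B ⟶ 𝟙_ D)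
    (hΔA : IsExactPairing A A' coevΔA evΔA)
    (hΔB : IsExactPairing B B' coevΔB evΔB)
    (hΞA : IsExactPairing (F.obj A) (F.obj A') coevΞA evΞA)
    (hΞB : IsExactPairing (F.obj B) (F.obj B') coevΞB evΞB)
    (f' : A' ⟶ B') (ξ : 𝟙_ C ⟶ B) :
    (ε F ≫ F.map (ξ ≫ gysin coevΔA evΔB f')) ≫ toddClass F evΔA coevΞA =
      (ε F ≫ F.map ξ) ≫ toddClass F evΔB coevΞB ≫
        gysin coevΞA evΞB (F.map f') := by
  rw [F.map_comp, map_gysin F coevΔA evΔB f']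
  have tA : toddClass F evΔA coevΞA
      = gysin coevΞA (chEv F evΔA) (𝟙 (F.obj A')) := by
    simp only [toddClass, gysin, id_whiskerRight, MonoidalCategory.whiskerLeft_id,
      Category.id_comp]
  have tB : toddClass F evΔB coevΞB
      = gysin coevΞB (chEv F evΔB) (𝟙 (F.obj B')) := by
    simp only [toddClass, gysin, id_whiskerRight, MonoidalCategory.whiskerLeft_id,
      Category.id_comp]
  rw [tA, tB, Category.assoc, Category.assoc, Category.assoc,
    gysin_gysin _ _ _ _ _ _ (chZig2 F coevΔA evΔA hΔA.2),
    gysin_gysin _ _ _ _ _ _ hΞB.2, Category.id_comp, Category.comp_id]
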